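/- arXiv:2602.19343 — 3 statements merged into one kernel-verified Lean document; each statement's English description precedes it below -/
import Mathlib

section
/- If P is a polynomial and R > 0, then for every complex z, P(z) = (1/(2πi)) ∮_{|t|=R} e^{zt} (BP)(t) dt, where BP is the Borel transform of P. -/
/-! By the Cauchy integral formula for derivatives, `∮_{|t|=R} e^{zt} / t^{n+1} dt = 2πi zⁿ / n!`,
since the `n`-th derivative of `t ↦ e^{zt}` at `0` is `zⁿ`. The factor `n!` in the Borel transform
cancels the `1 / n!`, so integrating `e^{zt} (BP)(t)` term by term recovers `2πi ∑ aₙ zⁿ`. -/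

open Complex Metric

theorem circleIntegral_cexp_mul_const_div_pow_succ (z c : ℂ) {R : ℝ} (hR : 0 < R) (n : ℕ) :
    (∮ t in C(0, R), exp (z * t) * (c / t ^ (n + 1))) =
      2 * Real.pi * I * (c * z ^ n / n.factorial) := by
  have hexp : Differentiable ℂ fun t => exp (z * t) := by fun_prop
  have cauchy := hexp.differentiableOn.circleIntegral_one_div_sub_center_pow_smul (c := 0) hR n
  simp only [sub_zero, smul_eq_mul, iteratedDeriv_cexp_const_mul, mul_zero, exp_zero,
    mul_one] at cauchy
  calc (∮ t in C(0, R), exp (z * t) * (c / t ^ (n + 1)))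
      = c * ∮ t in C(0, R), 1 / t ^ (n + 1) * exp (z * t) := by
        rw [← circleIntegral.integral_const_mul]
        congr 1 with t
        ring
    _ = 2 * Real.pi * I * (c * z ^ n / n.factorial) := by
        rw [cauchy]
        ring

theorem circleIntegrable_cexp_mul_const_div_pow (z c : ℂ) {R : ℝ} (hR : 0 < R) (n : ℕ) :
    CircleIntegrable (fun t => exp (z * t) * (c / t ^ n)) 0 R := by
  refine ContinuousOn.circleIntegrable hR.le fun t ht => ?_
  have ht0 : t ≠ 0 := ne_zero_of_mem_sphere hR.ne' ⟨t, ht⟩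
  exact ContinuousAt.continuousWithinAt (by fun_prop (disch := exact pow_ne_zero _ ht0))

/-- Pólya representation for polynomials: for any R > 0,
P(z) = (1/(2πi)) ∮_{|t|=R} e^{zt} (BP)(t) dt. -/
theorem stmt1 (P : Polynomial ℂ) (R : ℝ) (hR : 0 < R) (z : ℂ) :
    P.eval z = (2 * Real.pi * Complex.I)⁻¹ *
      ∮ t in C(0, R), Complex.exp (z * t) *
        ∑ n ∈ Finset.range (P.natDegree + 1), ((Nat.factorial n : ℕ) : ℂ) * P.coeff n / t ^ (n + 1) := by
  simp_rw [Finset.mul_sum]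
  rw [circleIntegral.integral_fun_sum fun n _ =>
    circleIntegrable_cexp_mul_const_div_pow z _ hR (n + 1)]
  simp_rw [circleIntegral_cexp_mul_const_div_pow_succ z _ hR, ← Finset.mul_sum,
    inv_mul_cancel_left₀ two_pi_I_ne_zero, P.eval_eq_sum_range]
  refine Finset.sum_congr rfl fun n _ => ?_
  have hfact : (n.factorial : ℂ) ≠ 0 := mod_cast n.factorial_ne_zero
  field_simp
end

section
/- Let Φ(z) = Σ hⱼ zʲ be an entire function of exponential type, let R > 0, and let g be continuous on the circle |t| = R with g(t)/Φ(t) well-defined (Φ nonvanishing on the circle). Then for every z ∈ ℂ, Σ_{j=0}^∞ hⱼ (d/dz)^j [(1/(2πi)) ∮_{|t|=R} e^{zt} g(t)/Φ(t) dt] = (1/(2πi)) ∮_{|t|=R} e^{zt} g(t) dt; i.e., applying the differential operator Φ(D) to the function S(z) = (1/(2πi)) ∮_{|t|=R} e^{zt} g(t)/Φ(t) dt recovers (1/(2πi)) ∮_{|t|=R} e^{zt} g(t) dt. -/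
/-!
Differentiating under the integral sign gives
`S⁽ʲ⁾(z) = (2πi)⁻¹ ∮ tʲ e^{zt} g(t)/Φ(t) dt`. On the circle `|t| = R` the series `∑ hⱼ tʲ` is
dominated by the convergent series `∑ ‖hⱼ Rʲ‖`, so it may be summed under the integral sign, where it
reproduces `Φ(t)` and cancels the denominator.
-/

open Complex Metric Set

theorem hasDerivAt_intervalIntegral_of_continuous {𝕜 E : Type*} [RCLike 𝕜]
    [NormedAddCommGroup E] [NormedSpace ℝ E] [NormedSpace 𝕜 E] {F F' : 𝕜 → ℝ → E}
    (hF : Continuous fun p : 𝕜 × ℝ => F p.1 p.2) (hF' : Continuous fun p : 𝕜 × ℝ => F' p.1 p.2)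
    (hFF' : ∀ x θ, HasDerivAt (F · θ) (F' x θ) x) (a b : ℝ) (w : 𝕜) :
    HasDerivAt (fun x => ∫ θ in a..b, F x θ) (∫ θ in a..b, F' w θ) w := by
  obtain ⟨C, hC⟩ := ((isCompact_closedBall w 1).prod isCompact_uIcc).exists_bound_of_continuousOn
    (hF'.continuousOn (s := closedBall w 1 ×ˢ uIcc a b))
  have hFx : ∀ x, Continuous (F x) := fun x => hF.comp (Continuous.prodMk_right x)
  refine (intervalIntegral.hasDerivAt_integral_of_dominated_loc_of_deriv_le (bound := fun _ => C)
    (ball_mem_nhds w one_pos) (.of_forall fun x => (hFx x).aestronglyMeasurable)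
    ((hFx w).intervalIntegrable a b) (hF'.comp (Continuous.prodMk_right w)).aestronglyMeasurable
    (.of_forall fun θ hθ x hx => hC (x, θ) ⟨ball_subset_closedBall hx, uIoc_subset_uIcc hθ⟩)
    intervalIntegrable_const (.of_forall fun θ _ x _ => hFF' x θ)).2

theorem hasDerivAt_circleIntegral_exp_mul {c : ℂ} {R : ℝ} (hR : 0 ≤ R) {f : ℂ → ℂ}
    (hf : ContinuousOn f (sphere c R)) (w : ℂ) :
    HasDerivAt (fun x => ∮ t in C(c, R), exp (x * t) * f t)
      (∮ t in C(c, R), exp (w * t) * (t * f t)) w := by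
  have hfc : Continuous fun p : ℂ × ℝ => f (circleMap c R p.2) :=
    (hf.comp_continuous (continuous_circleMap c R) (circleMap_mem_sphere c hR)).comp continuous_snd
  simp only [circleIntegral, deriv_circleMap, smul_eq_mul]
  refine hasDerivAt_intervalIntegral_of_continuous
    (F := fun x θ => circleMap 0 R θ * I * (exp (x * circleMap c R θ) * f (circleMap c R θ)))
    (F' := fun x θ => circleMap 0 R θ * I *
      (exp (x * circleMap c R θ) * (circleMap c R θ * f (circleMap c R θ))))
    ((by fun_prop : Continuous _).mul ((by fun_prop : Continuous _).mul hfc))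
    ((by fun_prop : Continuous _).mul ((by fun_prop : Continuous _).mul
      ((by fun_prop : Continuous _).mul hfc)))
    (fun x θ => ?_) _ _ w
  have := (((hasDerivAt_id' x).mul_const (circleMap c R θ)).cexp.mul_const
    (f (circleMap c R θ))).const_mul (circleMap 0 R θ * I)
  exact this.congr_deriv (by ring)

theorem iteratedDeriv_circleIntegral_exp_mul {c : ℂ} {R : ℝ} (hR : 0 ≤ R) {f : ℂ → ℂ}
    (hf : ContinuousOn f (sphere c R)) (n : ℕ) :
    iteratedDeriv n (fun x => ∮ t in C(c, R), exp (x * t) * f t) =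
      fun x => ∮ t in C(c, R), exp (x * t) * (t ^ n * f t) := by
  induction n generalizing f with
  | zero => simp
  | succ n ih =>
    have hderiv : deriv (fun x => ∮ t in C(c, R), exp (x * t) * f t) =
        fun x => ∮ t in C(c, R), exp (x * t) * (t * f t) :=
      funext fun x => (hasDerivAt_circleIntegral_exp_mul hR hf x).deriv
    rw [iteratedDeriv_succ', hderiv, ih (f := fun t => t * f t) (continuousOn_id.mul hf)]
    simp only [pow_succ, mul_assoc]

theorem hasSum_circleIntegral_of_norm_le {E ι : Type*} [NormedAddCommGroup E] [NormedSpace ℂ E]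
    [CompleteSpace E] [Countable ι] {F : ι → ℂ → E} {u : ι → ℝ} {c : ℂ} {R : ℝ} (hR : 0 ≤ R)
    (hF : ∀ i, ContinuousOn (F i) (sphere c R)) (hu : Summable u)
    (hFu : ∀ i, ∀ z ∈ sphere c R, ‖F i z‖ ≤ u i) :
    HasSum (fun i => ∮ z in C(c, R), F i z) (∮ z in C(c, R), ∑' i, F i z) := by
  have := (tendstoUniformlyOn_tsum hu hFu).tendsto_circleIntegral_of_continuousOn hR
    (.of_forall fun s => continuousOn_finsetSum s fun i _ => hF i)
  simp only [circleIntegral.integral_fun_sum fun i _ => (hF i).circleIntegrable hR] at this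
  exact this

section PowerSeriesOnSphere

variable {h : ℕ → ℂ} {Φ : ℂ → ℂ} {R : ℝ}

theorem norm_mul_pow_eq_of_mem_sphere (hR : 0 ≤ R) {t : ℂ} (ht : t ∈ sphere (0 : ℂ) R) (j : ℕ) :
    ‖h j * t ^ j‖ = ‖h j * (R : ℂ) ^ j‖ := by
  rw [mem_sphere_zero_iff_norm] at ht
  simp [ht, abs_of_nonneg hR]

theorem summable_norm_mul_ofReal_pow (hR : 0 ≤ R)
    (hΦ : ∀ t ∈ sphere (0 : ℂ) R, HasSum (fun j => h j * t ^ j) (Φ t)) :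
    Summable fun j => ‖h j * (R : ℂ) ^ j‖ :=
  summable_norm_iff.mpr (hΦ R (by simp [abs_of_nonneg hR])).summable

theorem continuousOn_sphere_of_hasSum_pow (hR : 0 ≤ R)
    (hΦ : ∀ t ∈ sphere (0 : ℂ) R, HasSum (fun j => h j * t ^ j) (Φ t)) :
    ContinuousOn Φ (sphere 0 R) := by
  refine (continuousOn_tsum (fun j => by fun_prop) (summable_norm_mul_ofReal_pow hR hΦ)
    fun j t ht => (norm_mul_pow_eq_of_mem_sphere hR ht j).le).congr fun t ht => ?_
  exact (hΦ t ht).tsum_eq.symm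

theorem hasSum_mul_iteratedDeriv_circleIntegral_exp_mul (hR : 0 ≤ R)
    (hΦ : ∀ t ∈ sphere (0 : ℂ) R, HasSum (fun j => h j * t ^ j) (Φ t)) {f : ℂ → ℂ}
    (hf : ContinuousOn f (sphere 0 R)) (z : ℂ) :
    HasSum (fun j => h j * iteratedDeriv j (fun w => ∮ t in C(0, R), exp (w * t) * f t) z)
      (∮ t in C(0, R), exp (z * t) * (Φ t * f t)) := by
  have hexpf : ContinuousOn (fun t => exp (z * t) * f t) (sphere 0 R) :=
    (by fun_prop : Continuous fun t => exp (z * t)).continuousOn.mul hf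
  obtain ⟨M, hM⟩ := (isCompact_sphere (0 : ℂ) R).exists_bound_of_continuousOn hexpf
  have hbound : ∀ j, ∀ t ∈ sphere (0 : ℂ) R,
      ‖h j * (exp (z * t) * (t ^ j * f t))‖ ≤ ‖h j * (R : ℂ) ^ j‖ * M := fun j t ht => by
    rw [show h j * (exp (z * t) * (t ^ j * f t)) = h j * t ^ j * (exp (z * t) * f t) by ring,
      norm_mul, norm_mul_pow_eq_of_mem_sphere hR ht]
    gcongr
    exact hM t ht
  have hpointwise : ∀ t ∈ sphere (0 : ℂ) R,
      ∑' j, h j * (exp (z * t) * (t ^ j * f t)) = exp (z * t) * (Φ t * f t) := fun t ht => by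
    rw [show exp (z * t) * (Φ t * f t) = Φ t * (exp (z * t) * f t) by ring,
      ← ((hΦ t ht).mul_right (exp (z * t) * f t)).tsum_eq]
    exact tsum_congr fun j => by ring
  have := hasSum_circleIntegral_of_norm_le hR (fun j => by fun_prop)
    ((summable_norm_mul_ofReal_pow hR hΦ).mul_right M) hbound
  rw [circleIntegral.integral_congr hR hpointwise] at this
  simpa only [iteratedDeriv_circleIntegral_exp_mul hR hf, circleIntegral.integral_const_mul]
    using this

end PowerSeriesOnSphere

theorem stmt3_general (h : ℕ → ℂ) (Φ : ℂ → ℂ)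
    (hΦ : ∀ z : ℂ, HasSum (fun j => h j * z ^ j) (Φ z))
    (R : ℝ) (hR : 0 < R) (g : ℂ → ℂ)
    (hg : ContinuousOn g (Metric.sphere (0 : ℂ) R))
    (hΦ0 : ∀ t : ℂ, ‖t‖ = R → Φ t ≠ 0) (z : ℂ) :
    HasSum (fun j => h j * iteratedDeriv j
        (fun w => (2 * Real.pi * Complex.I)⁻¹ *
          ∮ t in C(0, R), Complex.exp (w * t) * g t / Φ t) z)
      ((2 * Real.pi * Complex.I)⁻¹ * ∮ t in C(0, R), Complex.exp (z * t) * g t) := by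
  have hΦR : ∀ t ∈ sphere (0 : ℂ) R, HasSum (fun j => h j * t ^ j) (Φ t) := fun t _ => hΦ t
  have hΦR0 : ∀ t ∈ sphere (0 : ℂ) R, Φ t ≠ 0 := fun t ht => hΦ0 t (mem_sphere_zero_iff_norm.mp ht)
  have hf : ContinuousOn (fun t => g t / Φ t) (sphere 0 R) :=
    hg.div (continuousOn_sphere_of_hasSum_pow hR.le hΦR) hΦR0
  have key := (hasSum_mul_iteratedDeriv_circleIntegral_exp_mul hR.le hΦR hf z).mul_left
    (2 * Real.pi * I)⁻¹
  have hcancel : EqOn (fun t => exp (z * t) * (Φ t * (g t / Φ t))) (fun t => exp (z * t) * g t)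
      (sphere 0 R) := fun t ht => by
    simp only [mul_div_cancel₀ _ (hΦR0 t ht)]
  rw [circleIntegral.integral_congr hR.le hcancel] at key
  simpa only [iteratedDeriv_const_mul_field, mul_div_assoc, mul_left_comm] using key

/-- Applying Φ(D) to S(z) = (1/(2πi)) ∮_{|t|=R} e^{zt} g(t)/Φ(t) dt
recovers (1/(2πi)) ∮_{|t|=R} e^{zt} g(t) dt. -/
theorem stmt3 (h : ℕ → ℂ) (Φ : ℂ → ℂ)
    (hΦ : ∀ z : ℂ, HasSum (fun j => h j * z ^ j) (Φ z))
    (htype : ∃ A B : ℝ, 0 < A ∧ 0 < B ∧ ∀ z : ℂ, ‖Φ z‖ ≤ A * Real.exp (B * ‖z‖))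
    (R : ℝ) (hR : 0 < R) (g : ℂ → ℂ)
    (hg : ContinuousOn g (Metric.sphere (0 : ℂ) R))
    (hΦ0 : ∀ t : ℂ, ‖t‖ = R → Φ t ≠ 0) (z : ℂ) :
    HasSum (fun j => h j * iteratedDeriv j
        (fun w => (2 * Real.pi * Complex.I)⁻¹ *
          ∮ t in C(0, R), Complex.exp (w * t) * g t / Φ t) z)
      ((2 * Real.pi * Complex.I)⁻¹ * ∮ t in C(0, R), Complex.exp (z * t) * g t) :=
  stmt3_general h Φ hΦ R hR g hg hΦ0 z
end

section
/- Let (Tₙ) be a sequence of continuous linear maps from an F-space X to a separable F-space Y, Y₀ ⊆ Y dense, and Sₙ: Y₀ → X maps such that for all y ∈ Y₀: (i) Σ_{n=1}^k T_k S_{k−n} y converges unconditionally uniformly in k; (ii) Σ_{n=1}^∞ T_k S_{k+n} y converges unconditionally uniformly in k; (iii) Σ_{n=1}^∞ Sₙ y converges unconditionally; (iv) Tₙ Sₙ y → y. Then (Tₙ) is frequently hypercyclic: there exists x₀ ∈ X such that for every nonempty open U ⊆ Y, the set {n : Tₙ x₀ ∈ U} has positive lower density. -/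
/-!
Cut `ℕ` into consecutive blocks, the `i`-th of length `2 aᵢ` with `aᵢ = v₂(i + 1) + 1`. Since
`∑_{i<M} aᵢ ≤ 2M`, the centres of the blocks with `aᵢ = a` form a set `A_a` of positive lower
density, and centres of two different blocks of lengths `2a`, `2a'` are at distance at least
`a + a'`.

Enumerate a dense subset of `Y₀` as `(y_j)`, each point infinitely often, choose `m_j` increasing
fast enough and put `x = ∑_j ∑_{n ∈ A_{m_j}} Sₙ y_j`, which converges by (iii). For `n ∈ A_{m_j}`,
`Tₙ x - y_j` is `Tₙ Sₙ y_j - y_j`, small by (iv), plus, for each `l`, a sum of `Tₙ S_{n'} y_l`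
over `n' ≠ n` with `|n - n'| ≥ m_j + m_l`, which (i) and (ii) make smaller than `2^{-j-l}`.
Hence `Tₙ x` lies within `3 · 2^{-j}` of `y_j` on a set of positive lower density.
-/

open Filter Topology Finset

def blockLen (i : ℕ) : ℕ := padicValNat 2 (i + 1) + 1

def blockStart (i : ℕ) : ℕ := ∑ k ∈ range i, 2 * blockLen k

def blockCenter (i : ℕ) : ℕ := blockStart i + blockLen i

def blockCenters (a : ℕ) : Set ℕ := blockCenter '' {i | blockLen i = a}

lemma one_le_blockLen (i : ℕ) : 1 ≤ blockLen i := Nat.le_add_left _ _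

lemma blockLen_le_blockCenter (i : ℕ) : blockLen i ≤ blockCenter i := Nat.le_add_left _ _

lemma blockStart_mono : Monotone blockStart := fun _ _ h => sum_le_sum_of_subset (range_mono h)

lemma blockStart_succ (i : ℕ) : blockStart (i + 1) = blockStart i + 2 * blockLen i :=
  sum_range_succ _ _

lemma blockCenter_lt_blockStart {i M : ℕ} (h : i < M) : blockCenter i < blockStart M := by
  have := blockStart_mono (Nat.succ_le_of_lt h)
  have := one_le_blockLen i
  rw [blockStart_succ] at *
  unfold blockCenter
  omega

lemma blockCenter_add_le {i i' : ℕ} (h : i < i') :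
    blockCenter i + blockLen i + blockLen i' ≤ blockCenter i' := by
  have := blockStart_mono (Nat.succ_le_of_lt h)
  rw [blockStart_succ] at this
  unfold blockCenter
  omega

lemma blockCenter_strictMono : StrictMono blockCenter := fun i _ h => by
  have := blockCenter_add_le h
  have := one_le_blockLen i
  omega

lemma sum_padicValNat_two_le (M : ℕ) : ∑ i ∈ range M, padicValNat 2 (i + 1) ≤ M := by
  have hfac : ∑ i ∈ range M, padicValNat 2 (i + 1) = padicValNat 2 M.factorial := by
    induction M with
    | zero => simp
    | succ n ih =>
      rw [sum_range_succ, ih, Nat.factorial_succ, mul_comm,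
        padicValNat.mul (Nat.factorial_ne_zero n) (Nat.succ_ne_zero n)]
  have := sub_one_mul_padicValNat_factorial (p := 2) M
  omega

lemma blockStart_le (M : ℕ) : blockStart M ≤ 4 * M := by
  have := sum_padicValNat_two_le M
  simp only [blockStart, blockLen, mul_add, sum_add_distrib, ← mul_sum, sum_const, card_range,
    smul_eq_mul, mul_one]
  omega

lemma div_two_pow_le_card_filter_padicValNat (t M : ℕ) :
    M / 2 ^ (t + 1) ≤ #{i ∈ range M | padicValNat 2 (i + 1) = t} := by
  have hset : {i ∈ range M | padicValNat 2 (i + 1) = t}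
      = {i ∈ range M | 2 ^ t ∣ i + 1} \ {i ∈ range M | 2 ^ (t + 1) ∣ i + 1} := by
    ext i
    simp only [Finset.mem_sdiff, mem_filter, mem_range,
      padicValNat_dvd_iff_le (Nat.add_one_ne_zero i)]
    omega
  have hsub : {i ∈ range M | 2 ^ (t + 1) ∣ i + 1} ⊆ {i ∈ range M | 2 ^ t ∣ i + 1} :=
    fun i => by
      simp only [mem_filter]
      exact fun h => ⟨h.1, (pow_dvd_pow 2 t.le_succ).trans h.2⟩
  rw [hset, card_sdiff_of_subset hsub, Nat.card_multiples, Nat.card_multiples, pow_succ,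
    ← Nat.div_div_eq_div_mul]
  omega

lemma le_of_mem_blockCenters {a n : ℕ} (hn : n ∈ blockCenters a) : a ≤ n := by
  obtain ⟨i, rfl, rfl⟩ := hn
  exact blockLen_le_blockCenter i

lemma add_lt_or_add_lt_of_mem_blockCenters {a a' n n' N : ℕ} (hn : n ∈ blockCenters a)
    (hn' : n' ∈ blockCenters a') (hne : n' ≠ n) (hN : N < a + a') : n' + N < n ∨ n + N < n' := by
  obtain ⟨i, rfl, rfl⟩ := hn
  obtain ⟨i', rfl, rfl⟩ := hn'
  rcases lt_or_gt_of_ne hne with h | h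
  · have := blockCenter_add_le (blockCenter_strictMono.lt_iff_lt.1 h)
    omega
  · have := blockCenter_add_le (blockCenter_strictMono.lt_iff_lt.1 h)
    omega

lemma eq_of_mem_blockCenters {a a' n : ℕ} (hn : n ∈ blockCenters a)
    (hn' : n ∈ blockCenters a') : a = a' := by
  obtain ⟨i, rfl, rfl⟩ := hn
  obtain ⟨i', rfl, h⟩ := hn'
  rw [blockCenter_strictMono.injective h]

lemma div_le_ncard_blockCenters {a : ℕ} (ha : 1 ≤ a) (N : ℕ) :
    N / (4 * 2 ^ a) ≤ {n | n < N ∧ n + 1 ∈ blockCenters a}.ncard := by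
  have hcard := div_two_pow_le_card_filter_padicValNat (a - 1) (N / 4)
  rw [Nat.sub_add_cancel ha, Nat.div_div_eq_div_mul] at hcard
  refine hcard.trans ?_
  rw [← Set.ncard_coe_finset]
  refine Set.ncard_le_ncard_of_injOn (fun i => blockCenter i - 1) (fun i hi => ?_)
    (fun i _ i' _ h => ?_) ((Set.finite_lt_nat N).subset fun n hn => hn.1)
  · simp only [coe_filter, mem_range, Set.mem_ofPred_eq] at hi
    have := blockCenter_lt_blockStart hi.1
    have := blockStart_le (N / 4)
    have := one_le_blockLen i
    have := blockLen_le_blockCenter i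
    refine ⟨by omega, i, by simp only [Set.mem_ofPred_eq, blockLen]; omega, by omega⟩
  · have := one_le_blockLen i
    have := one_le_blockLen i'
    have := blockLen_le_blockCenter i
    have := blockLen_le_blockCenter i'
    exact blockCenter_strictMono.injective (by simp only at h; omega)

/-- The `n < N` with `n + 1 ∈ s` enumerate `s ∩ {1, …, N}`. -/
noncomputable def lowerDensity (s : Set ℕ) : ℝ :=
  liminf (fun N : ℕ => ({n | n < N ∧ n + 1 ∈ s}.ncard : ℝ) / N) atTop

lemma ncard_lt_add_one_mem_le_self (s : Set ℕ) (N : ℕ) : {n | n < N ∧ n + 1 ∈ s}.ncard ≤ N :=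
  calc _ ≤ (range N : Set ℕ).ncard :=
        Set.ncard_le_ncard (fun n hn => mem_range.2 hn.1) (range N).finite_toSet
    _ = N := by rw [Set.ncard_coe_finset, card_range]

lemma isBoundedUnder_le_ncard_div (s : Set ℕ) :
    IsBoundedUnder (· ≤ ·) atTop fun N : ℕ => ({n | n < N ∧ n + 1 ∈ s}.ncard : ℝ) / N :=
  isBoundedUnder_of ⟨1, fun N =>
    div_le_one_of_le₀ (by exact_mod_cast ncard_lt_add_one_mem_le_self s N) N.cast_nonneg⟩

lemma lowerDensity_mono {s t : Set ℕ} (h : s ⊆ t) : lowerDensity s ≤ lowerDensity t :=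
  liminf_le_liminf (Eventually.of_forall fun N => by
      gcongr
      exact (range N).finite_toSet.subset fun n hn => mem_range.2 hn.1)
    (isBoundedUnder_of ⟨0, fun N => by positivity⟩)
    (isBoundedUnder_le_ncard_div t).isCoboundedUnder_ge

lemma lowerDensity_pos_of_forall_div_le {s : Set ℕ} {D : ℕ} (hD : 0 < D)
    (h : ∀ N, N / D ≤ {n | n < N ∧ n + 1 ∈ s}.ncard) : 0 < lowerDensity s := by
  refine lt_of_lt_of_le (by positivity : (0 : ℝ) < 1 / (2 * D))
    (le_liminf_of_le (isBoundedUnder_le_ncard_div s).isCoboundedUnder_ge ?_)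
  filter_upwards [eventually_ge_atTop (2 * D)] with N hN
  have hND : N ≤ 2 * D * (N / D) := by
    have := Nat.lt_div_mul_add (a := N) hD
    nlinarith
  rw [div_le_div_iff₀ (by positivity) (by exact_mod_cast (by omega : 0 < N)), one_mul]
  calc (N : ℝ) ≤ 2 * D * (N / D : ℕ) := by exact_mod_cast hND
    _ ≤ 2 * D * {n | n < N ∧ n + 1 ∈ s}.ncard := by gcongr; exact_mod_cast h N
    _ = _ := mul_comm _ _

lemma lowerDensity_blockCenters_pos {a : ℕ} (ha : 1 ≤ a) : 0 < lowerDensity (blockCenters a) :=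
  lowerDensity_pos_of_forall_div_le (by positivity) (div_le_ncard_blockCenters ha)

lemma exists_strictMono_forall_lt (b : ℕ → ℕ) : ∃ m : ℕ → ℕ, StrictMono m ∧ ∀ j, b j < m j :=
  ⟨fun j => ∑ i ∈ range (j + 1), (b i + 1),
    strictMono_nat_of_lt_succ fun j => by rw [sum_range_succ _ (j + 1)]; omega,
    fun j => by dsimp only; rw [sum_range_succ]; omega⟩

lemma Dense.exists_seq_mem_denseRange {Y : Type*} [TopologicalSpace Y]
    [TopologicalSpace.PseudoMetrizableSpace Y] [TopologicalSpace.SeparableSpace Y] [Nonempty Y]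
    {Y₀ : Set Y} (hY₀ : Dense Y₀) : ∃ e : ℕ → Y, (∀ p, e p ∈ Y₀) ∧ DenseRange e := by
  have : Nonempty Y₀ := hY₀.nonempty.to_subtype
  have := (TopologicalSpace.IsSeparable.of_separableSpace Y₀).separableSpace
  obtain ⟨e, he⟩ := TopologicalSpace.exists_dense_seq Y₀
  exact ⟨fun p => e p, fun p => (e p).2, hY₀.denseRange_val.comp he continuous_subtype_val⟩

section NormedGroup

variable {E ι : Type*} [SeminormedAddCommGroup E]

lemma summable_of_forall_norm_sum_lt [CompleteSpace E] {f : ℕ → E}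
    (h : ∀ ε > 0, ∃ N, ∀ F : Finset ℕ, (∀ n ∈ F, N < n) → ‖∑ n ∈ F, f n‖ < ε) : Summable f := by
  refine summable_iff_vanishing_norm.2 fun ε hε => ?_
  obtain ⟨N, hN⟩ := h ε hε
  refine ⟨range (N + 1), fun F hF => hN F fun n hn => ?_⟩
  have := disjoint_left.1 hF hn
  rw [mem_range] at this
  omega

lemma norm_tsum_indicator_le {f : ι → E} {A : Set ι} {C : ℝ} (hf : Summable (A.indicator f))
    (h : ∀ F : Finset ι, (F : Set ι) ⊆ A → ‖∑ i ∈ F, f i‖ ≤ C) :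
    ‖∑' i, A.indicator f i‖ ≤ C := by
  classical
  refine le_of_tendsto' hf.hasSum.norm fun F => ?_
  rw [← sum_filter_add_sum_filter_not F (· ∈ A), sum_congr rfl fun i hi => Set.indicator_of_mem (mem_filter.1 hi).2 f,
    sum_congr rfl fun i hi => Set.indicator_of_notMem (mem_filter.1 hi).2 f, sum_const_zero,
    add_zero]
  exact h _ fun i hi => (mem_filter.1 hi).2

lemma exists_forall_norm_sum_lt_of_far {g : ℕ → ℕ → E}
    (hbelow : ∀ ε > 0, ∃ N, ∀ k (F : Finset ℕ), (∀ n ∈ F, N < n ∧ 1 ≤ n ∧ n ≤ k) →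
      ‖∑ n ∈ F, g k (k - n)‖ < ε)
    (habove : ∀ ε > 0, ∃ N, ∀ k (F : Finset ℕ), (∀ n ∈ F, N < n) → ‖∑ n ∈ F, g k (k + n)‖ < ε) :
    ∀ ε > 0, ∃ N, ∀ k (F : Finset ℕ), (∀ n ∈ F, n + N < k ∨ k + N < n) →
      ‖∑ n ∈ F, g k n‖ < ε := by
  intro ε hε
  obtain ⟨N₁, hN₁⟩ := hbelow (ε / 2) (half_pos hε)
  obtain ⟨N₂, hN₂⟩ := habove (ε / 2) (half_pos hε)
  refine ⟨max N₁ N₂, fun k F hF => ?_⟩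
  have hlt : ∑ n ∈ F with n < k, g k n = ∑ ν ∈ {n ∈ F | n < k}.image (k - ·), g k (k - ν) := by
    rw [sum_image fun a ha b hb h => by simp only [coe_filter, Set.mem_ofPred_eq] at ha hb h; omega]
    exact sum_congr rfl fun n hn => by rw [Nat.sub_sub_self (mem_filter.1 hn).2.le]
  have hgt : ∑ n ∈ F with ¬n < k, g k n = ∑ ν ∈ {n ∈ F | ¬n < k}.image (· - k), g k (k + ν) := by
    rw [sum_image fun a ha b hb h => by simp only [coe_filter, Set.mem_ofPred_eq] at ha hb h; omega]
    exact sum_congr rfl fun n hn => by rw [Nat.add_sub_cancel' (not_lt.1 (mem_filter.1 hn).2)]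
  have h₁ := hN₁ k ({n ∈ F | n < k}.image (k - ·)) <| by
    simp only [mem_image, mem_filter]
    rintro _ ⟨n, ⟨hn, hnk⟩, rfl⟩
    have := hF n hn
    omega
  have h₂ := hN₂ k ({n ∈ F | ¬n < k}.image (· - k)) <| by
    simp only [mem_image, mem_filter]
    rintro _ ⟨n, ⟨hn, hnk⟩, rfl⟩
    have := hF n hn
    omega
  rw [← sum_filter_add_sum_filter_not F (· < k), hlt, hgt]
  exact (norm_add_le _ _).trans_lt (by linarith)

end NormedGroup

section Approximation

variable {X Y 𝓕 : Type*} [NormedAddCommGroup X] [CompleteSpace X] [NormedAddCommGroup Y]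
  [FunLike 𝓕 X Y] [AddMonoidHomClass 𝓕 X Y] [ContinuousMapClass 𝓕 X Y]

lemma norm_map_tsum_tsum_indicator_sub_le {ι κ : Type*} (T : 𝓕) {f : ι → κ → X}
    (hf : ∀ l, Summable (f l)) {A : ι → Set κ} {j : ι} {k : κ} (hA : ∀ l, k ∈ A l ↔ l = j)
    (hu : Summable fun l => ∑' k', (A l).indicator (f l) k') {c : ι → ℝ} {C : ℝ}
    (hc : HasSum c C)
    (hcF : ∀ l (F : Finset κ), (F : Set κ) ⊆ A l \ {k} → ‖∑ k' ∈ F, T (f l k')‖ ≤ c l) :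
    ‖T (∑' l, ∑' k', (A l).indicator (f l) k') - T (f j k)‖ ≤ C := by
  classical
  have hv : HasSum (fun l => ∑' k', (A l \ {k}).indicator (f l) k')
      (∑' l, ∑' k', (A l).indicator (f l) k' - f j k) := by
    convert hu.hasSum.sub (hasSum_ite_eq j (f j k)) using 1
    funext l
    rw [((hf l).indicator (A l)).tsum_eq_add_tsum_ite k]
    have hk : (A l).indicator (f l) k = if l = j then f j k else 0 := by
      by_cases hl : l = j
      · subst hl; simp [Set.indicator_of_mem ((hA l).2 rfl)]
      · simp [hl, Set.indicator_of_notMem (mt (hA l).1 hl)]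
    rw [hk, add_sub_cancel_left]
    congr 1
    funext k'
    by_cases hk' : k' = k <;> simp [hk', Set.indicator_apply]
  rw [← map_sub, ← hv.tsum_eq, hv.summable.map_tsum T (map_continuous T)]
  refine tsum_of_norm_bounded hc fun l => ?_
  have hB : Summable ((A l \ {k}).indicator (f l)) := (hf l).indicator _
  have hTB : T ∘ (A l \ {k}).indicator (f l) = (A l \ {k}).indicator (T ∘ f l) :=
    (Set.indicator_comp_of_zero (map_zero T)).symm
  rw [hB.map_tsum T (map_continuous T), ← Function.comp_def (⇑T), hTB]
  exact norm_tsum_indicator_le (hTB ▸ hB.map T (map_continuous T)) (hcF l)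

theorem exists_forall_lowerDensity_pos_dist_le (T : ℕ → 𝓕) (S : ℕ → Y → X) (y : ℕ → Y)
    (hTS : ∀ j, ∀ ε > 0, ∃ N, ∀ k (F : Finset ℕ), (∀ n ∈ F, n + N < k ∨ k + N < n) →
      ‖∑ n ∈ F, T k (S n (y j))‖ < ε)
    (hS : ∀ j, ∀ ε > 0, ∃ N, ∀ F : Finset ℕ, (∀ n ∈ F, N < n) → ‖∑ n ∈ F, S n (y j)‖ < ε)
    (hTS_diag : ∀ j, Tendsto (fun n => T n (S n (y j))) atTop (𝓝 (y j))) :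
    ∃ x : X, ∀ j, ∃ A : Set ℕ, 0 < lowerDensity A ∧
      ∀ n ∈ A, dist (T n x) (y j) ≤ 3 * (1 / 2) ^ j := by
  have hε (s : ℕ) : (0 : ℝ) < (1 / 2) ^ s := by positivity
  choose N₁ hN₁ using fun j s => hTS j _ (hε s)
  choose N₂ hN₂ using fun j s => hS j _ (hε s)
  choose N₃ hN₃ using fun j s => Metric.tendsto_atTop.1 (hTS_diag j) _ (hε s)
  -- `m j` exceeds the thresholds of (iii) and (iv) at precision `2⁻ʲ` and, for all `l ≤ j`, the
  -- two-sided threshold of `y l` at precision `2⁻²ʲ`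
  obtain ⟨m, hm, hmN⟩ := exists_strictMono_forall_lt fun j =>
    N₂ j j + N₃ j j + ∑ l ∈ range (j + 1), N₁ l (2 * j)
  set A : ℕ → Set ℕ := fun j => blockCenters (m j)
  have hmA {j n : ℕ} (hn : n ∈ A j) : m j ≤ n := le_of_mem_blockCenters hn
  have hA {j n : ℕ} (hn : n ∈ A j) (l : ℕ) : n ∈ A l ↔ l = j :=
    ⟨fun hl => hm.injective (eq_of_mem_blockCenters hl hn), fun hl => hl ▸ hn⟩
  have hN₁m (j l : ℕ) : N₁ l (2 * max j l) < m j + m l := by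
    have hl : N₁ l (2 * max j l) ≤ ∑ l' ∈ range (max j l + 1), N₁ l' (2 * max j l) :=
      single_le_sum (f := fun l' => N₁ l' (2 * max j l)) (fun _ _ => Nat.zero_le _)
        (mem_range.2 (Nat.lt_succ_of_le (le_max_right j l)))
    have := hmN (max j l)
    rcases max_choice j l with h | h <;> rw [h] at hl this ⊢ <;> omega
  have hS_sum (l : ℕ) : Summable fun n => S n (y l) := summable_of_forall_norm_sum_lt (hS l)
  have hu_le (l : ℕ) : ‖∑' n, (A l).indicator (fun n => S n (y l)) n‖ ≤ (1 / 2) ^ l := by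
    refine norm_tsum_indicator_le ((hS_sum l).indicator _) fun F hF =>
      (hN₂ l l F fun n hn => ?_).le
    have := hmA (hF hn)
    have := hmN l
    omega
  refine ⟨∑' l, ∑' n, (A l).indicator (fun n => S n (y l)) n, fun j =>
    ⟨A j, lowerDensity_blockCenters_pos (by have := hmN j; omega), fun n hn => ?_⟩⟩
  have hfar : ∀ l (F : Finset ℕ), (F : Set ℕ) ⊆ A l \ {n} →
      ‖∑ n' ∈ F, T n (S n' (y l))‖ ≤ (1 / 2) ^ j * (1 / 2) ^ l := by
    intro l F hF
    refine (hN₁ l (2 * max j l) n F fun n' hn' =>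
      add_lt_or_add_lt_of_mem_blockCenters hn (hF hn').1 (hF hn').2 (hN₁m j l)).le.trans ?_
    rw [← pow_add]
    exact pow_le_pow_of_le_one (by norm_num) (by norm_num) (by omega)
  calc dist (T n _) (y j) ≤ dist (T n _) (T n (S n (y j))) + dist (T n (S n (y j))) (y j) :=
        dist_triangle _ _ _
    _ ≤ (1 / 2) ^ j * 2 + (1 / 2) ^ j := by
        gcongr
        · rw [dist_eq_norm]
          exact norm_map_tsum_tsum_indicator_sub_le (T n) hS_sum (hA hn)
            (Summable.of_norm_bounded summable_geometric_two hu_le)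
            (hasSum_geometric_two.mul_left _) hfar
        · exact (hN₃ j j n (by have := hmA hn; have := hmN j; omega)).le
    _ = 3 * (1 / 2) ^ j := by ring

theorem exists_forall_isOpen_lowerDensity_pos [TopologicalSpace.SeparableSpace Y] (T : ℕ → 𝓕)
    (Y₀ : Set Y) (hY₀ : Dense Y₀) (S : ℕ → Y → X)
    (hTS : ∀ y ∈ Y₀, ∀ ε > 0, ∃ N, ∀ k (F : Finset ℕ), (∀ n ∈ F, n + N < k ∨ k + N < n) →
      ‖∑ n ∈ F, T k (S n y)‖ < ε)
    (hS : ∀ y ∈ Y₀, ∀ ε > 0, ∃ N, ∀ F : Finset ℕ, (∀ n ∈ F, N < n) → ‖∑ n ∈ F, S n y‖ < ε)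
    (hTS_diag : ∀ y ∈ Y₀, Tendsto (fun n => T n (S n y)) atTop (𝓝 y)) :
    ∃ x : X, ∀ U : Set Y, IsOpen U → U.Nonempty → 0 < lowerDensity {k | T k x ∈ U} := by
  obtain ⟨e, heY₀, he⟩ := hY₀.exists_seq_mem_denseRange
  -- every `e p` is the target `y j` for arbitrarily large `j`
  obtain ⟨x, hx⟩ := exists_forall_lowerDensity_pos_dist_le T S (fun j => e j.unpair.1)
    (fun j => hTS _ (heY₀ _)) (fun j => hS _ (heY₀ _)) (fun j => hTS_diag _ (heY₀ _))
  refine ⟨x, fun U hU hUne => ?_⟩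
  obtain ⟨p, hp⟩ := he.exists_mem_open hU hUne
  obtain ⟨r, hr, hball⟩ := Metric.isOpen_iff.1 hU _ hp
  obtain ⟨J, hJ⟩ :=
    exists_pow_lt_of_lt_one (by positivity : 0 < r / 3) (by norm_num : (1 / 2 : ℝ) < 1)
  obtain ⟨A, hA, hAU⟩ := hx (Nat.pair p J)
  refine hA.trans_le (lowerDensity_mono fun n hn => hball ?_)
  have hdist := hAU n hn
  rw [Nat.unpair_pair] at hdist
  calc dist (T n x) (e p) ≤ 3 * (1 / 2) ^ Nat.pair p J := hdist
    _ ≤ 3 * (1 / 2) ^ J := by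
        gcongr 3 * ?_
        exact pow_le_pow_of_le_one (by norm_num) (by norm_num) (Nat.right_le_pair p J)
    _ < r := by linarith

end Approximation

/-- Normed groups need no homogeneity of the norm, so a translation-invariant metric is the
metric of the group norm (F-norm) `‖x‖ = dist x 0`. -/
abbrev NormedAddCommGroup.ofAddDistRight {E : Type*} [AddCommGroup E] [MetricSpace E]
    (h : ∀ a b c : E, dist (a + c) (b + c) = dist a b) : NormedAddCommGroup E :=
  letI : Norm E := ⟨fun x => dist x 0⟩
  NormedAddCommGroup.ofAddDist (fun x => dist_comm x 0) fun x y z => by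
    rw [add_comm z x, add_comm z y, h]

theorem stmt14_general {X Y : Type*}
    [AddCommGroup X] [Module ℂ X] [MetricSpace X] [CompleteSpace X]
    [AddCommGroup Y] [Module ℂ Y] [MetricSpace Y] [TopologicalSpace.SeparableSpace Y]
    (hinvX : ∀ a b c : X, dist (a + c) (b + c) = dist a b)
    (hinvY : ∀ a b c : Y, dist (a + c) (b + c) = dist a b)
    (T : ℕ → X →L[ℂ] Y) (Y₀ : Set Y) (hY₀ : Dense Y₀) (S : ℕ → Y → X)
    (hi : ∀ y ∈ Y₀, ∀ ε : ℝ, 0 < ε → ∃ N : ℕ, ∀ k : ℕ, ∀ F : Finset ℕ,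
      (∀ n ∈ F, N < n ∧ 1 ≤ n ∧ n ≤ k) →
        dist (∑ n ∈ F, T k (S (k - n) y)) 0 < ε)
    (hii : ∀ y ∈ Y₀, ∀ ε : ℝ, 0 < ε → ∃ N : ℕ, ∀ k : ℕ, ∀ F : Finset ℕ,
      (∀ n ∈ F, N < n) → dist (∑ n ∈ F, T k (S (k + n) y)) 0 < ε)
    (hiii : ∀ y ∈ Y₀, ∀ ε : ℝ, 0 < ε → ∃ N : ℕ, ∀ F : Finset ℕ,
      (∀ n ∈ F, N < n) → dist (∑ n ∈ F, S n y) 0 < ε)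
    (hiv : ∀ y ∈ Y₀, Filter.Tendsto (fun n => T n (S n y)) Filter.atTop (nhds y)) :
    ∃ x₀ : X, ∀ U : Set Y, IsOpen U → U.Nonempty →
      0 < Filter.liminf (fun N : ℕ =>
        ((Set.ncard {n : ℕ | n < N ∧ T (n + 1) x₀ ∈ U}) : ℝ) / N) Filter.atTop := by
  let := NormedAddCommGroup.ofAddDistRight hinvX
  let := NormedAddCommGroup.ofAddDistRight hinvY
  exact exists_forall_isOpen_lowerDensity_pos T Y₀ hY₀ S
    (fun y hy => exists_forall_norm_sum_lt_of_far (g := fun k n => T k (S n y)) (hi y hy)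
      (hii y hy)) hiii hiv

/-- Bonilla–Grosse-Erdmann criterion for frequent hypercyclicity of a
sequence of operators between F-spaces. Unconditional convergence (uniformly in k) is
expressed through the finite-subset Cauchy condition, which in a complete space is
equivalent to unconditional convergence. -/
theorem stmt14 {X Y : Type*}
    [AddCommGroup X] [Module ℂ X] [MetricSpace X] [IsTopologicalAddGroup X]
    [ContinuousSMul ℂ X] [CompleteSpace X]
    [AddCommGroup Y] [Module ℂ Y] [MetricSpace Y] [IsTopologicalAddGroup Y]
    [ContinuousSMul ℂ Y] [CompleteSpace Y] [TopologicalSpace.SeparableSpace Y]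
    (hinvX : ∀ a b c : X, dist (a + c) (b + c) = dist a b)
    (hinvY : ∀ a b c : Y, dist (a + c) (b + c) = dist a b)
    (T : ℕ → X →L[ℂ] Y) (Y₀ : Set Y) (hY₀ : Dense Y₀) (S : ℕ → Y → X)
    (hi : ∀ y ∈ Y₀, ∀ ε : ℝ, 0 < ε → ∃ N : ℕ, ∀ k : ℕ, ∀ F : Finset ℕ,
      (∀ n ∈ F, N < n ∧ 1 ≤ n ∧ n ≤ k) →
        dist (∑ n ∈ F, T k (S (k - n) y)) 0 < ε)
    (hii : ∀ y ∈ Y₀, ∀ ε : ℝ, 0 < ε → ∃ N : ℕ, ∀ k : ℕ, ∀ F : Finset ℕ,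
      (∀ n ∈ F, N < n) → dist (∑ n ∈ F, T k (S (k + n) y)) 0 < ε)
    (hiii : ∀ y ∈ Y₀, ∀ ε : ℝ, 0 < ε → ∃ N : ℕ, ∀ F : Finset ℕ,
      (∀ n ∈ F, N < n) → dist (∑ n ∈ F, S n y) 0 < ε)
    (hiv : ∀ y ∈ Y₀, Filter.Tendsto (fun n => T n (S n y)) Filter.atTop (nhds y)) :
    ∃ x₀ : X, ∀ U : Set Y, IsOpen U → U.Nonempty →
      0 < Filter.liminf (fun N : ℕ =>
        ((Set.ncard {n : ℕ | n < N ∧ T (n + 1) x₀ ∈ U}) : ℝ) / N) Filter.atTop :=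
  stmt14_general hinvX hinvY T Y₀ hY₀ S hi hii hiii hiv
end
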